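/- For 0 < q < 1, the commutator ideal of A(SU_q(2)) equals V₁, the ℂ-linear span of the elements e_{j,k,l} with k + l ≥ 1. -/

import Mathlib

noncomputable section

namespace QAlg

/-- Generators of a free *-algebra: `inl i` is the generator `z i`, and
`inr i` is its formal adjoint `(z i)*`. -/
abbrev Gen (X : Type) := X ⊕ X

/-- The free algebra on the doubled generating set, realized as the monoid
algebra of the free monoid. -/
abbrev F (X : Type) := MonoidAlgebra ℂ (FreeMonoid (Gen X))

/-- The *-operation on words: reverse the word and exchange the two copies
of the generators. -/
def wordStar {X : Type} (w : FreeMonoid (Gen X)) : FreeMonoid (Gen X) :=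
  FreeMonoid.ofList (((FreeMonoid.toList w).map Sum.swap).reverse)

lemma wordStar_mul {X : Type} (w v : FreeMonoid (Gen X)) :
    wordStar (w * v) = wordStar v * wordStar w := by
  simp [wordStar, FreeMonoid.toList_mul, FreeMonoid.ofList_append]

lemma wordStar_wordStar {X : Type} (w : FreeMonoid (Gen X)) : wordStar (wordStar w) = w := by
  simp [wordStar, List.map_reverse, List.map_map, Sum.swap_swap_eq]

/-- The canonical conjugate-linear antimultiplicative involution on the free
algebra `F X`, determined by `star (z i) = (z i)*` and complex conjugation
on scalars. -/
def starF {X : Type} (f : F X) : F X :=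
  Finsupp.sum f.coeff fun w c => MonoidAlgebra.single (wordStar w) ((starRingEnd ℂ) c)

lemma starF_single {X : Type} (w : FreeMonoid (Gen X)) (c : ℂ) :
    starF (MonoidAlgebra.single w c) = MonoidAlgebra.single (wordStar w) ((starRingEnd ℂ) c) := by
  classical
  unfold starF
  rw [MonoidAlgebra.coeff_single]
  refine Finsupp.sum_single_index ?_
  simp

lemma starF_zero {X : Type} : starF (0 : F X) = 0 := by simp [starF]

lemma starF_add {X : Type} (f g : F X) : starF (f + g) = starF f + starF g := by
  classical
  unfold starF
  rw [MonoidAlgebra.coeff_add]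
  refine Finsupp.sum_add_index' (fun w => by simp) (fun w c₁ c₂ => by
    simp [map_add, MonoidAlgebra.single_add])

lemma starF_single_mul {X : Type} (w : FreeMonoid (Gen X)) (c : ℂ) (g : F X) :
    starF (MonoidAlgebra.single w c * g) = starF g * starF (MonoidAlgebra.single w c) := by
  classical
  induction g using MonoidAlgebra.induction with
  | zero => simp [starF_zero]
  | single_add v d g _ _ ihg =>
    rw [mul_add, starF_add, starF_add, add_mul, ihg]
    congr 1
    rw [MonoidAlgebra.single_mul_single, starF_single, starF_single, starF_single,
      MonoidAlgebra.single_mul_single, wordStar_mul, map_mul, mul_comm]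

lemma starF_mul {X : Type} (f g : F X) : starF (f * g) = starF g * starF f := by
  classical
  induction f using MonoidAlgebra.induction with
  | zero => simp [starF_zero]
  | single_add w c f _ _ ih =>
    rw [add_mul, starF_add, starF_add, ih, mul_add, starF_single_mul]

lemma starF_starF {X : Type} (f : F X) : starF (starF f) = f := by
  classical
  induction f using MonoidAlgebra.induction with
  | zero => simp [starF_zero]
  | single_add w c f _ _ ih =>
    rw [starF_add, starF_add, ih, starF_single, starF_single, wordStar_wordStar,
      Complex.conj_conj]

/-- The free *-algebra structure on `F X`. -/
def starRingF (X : Type) : StarRing (F X) where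
  star := starF
  star_involutive := starF_starF
  star_mul := starF_mul
  star_add := starF_add

/-- The generator `z i` inside the free *-algebra. -/
def zF {X : Type} (i : X) : F X := MonoidAlgebra.of ℂ _ (FreeMonoid.of (Sum.inl i))

/-- The formal adjoint `(z i)*` inside the free *-algebra. -/
def zsF {X : Type} (i : X) : F X := MonoidAlgebra.of ℂ _ (FreeMonoid.of (Sum.inr i))

/-- The defining relations of quantum `SU(2)` (with `zF 0 = α`, `zF 1 = β`,
`zsF i` playing the role of the adjoint generators), together with their
images under the *-operation. -/
inductive surel (q : ℝ) : F (Fin 2) → F (Fin 2) → Prop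
  | r1 : surel q (zF 1 * zF 0) ((q : ℂ) • (zF 0 * zF 1))
  | r2 : surel q (zsF 1 * zF 0) ((q : ℂ) • (zF 0 * zsF 1))
  | r3 : surel q (zF 1 * zsF 1) (zsF 1 * zF 1)
  | r4 : surel q (zF 0 * zsF 0 + zF 1 * zsF 1) 1
  | r5 : surel q (zsF 0 * zF 0 + ((q ^ 2 : ℝ) : ℂ) • (zF 1 * zsF 1)) 1
  | star_rel {a b} : surel q a b → surel q (starF a) (starF b)

/-- The coordinate *-algebra `A(SU_q(2))`. -/
abbrev SU (q : ℝ) := RingQuot (surel q)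

noncomputable instance (q : ℝ) : StarRing (SU q) :=
  @RingQuot.starRing _ _ (starRingF _) (surel q) (fun _ _ h => surel.star_rel h)

/-- The generator `α` of `A(SU_q(2))`. -/
def αg (q : ℝ) : SU q := RingQuot.mkAlgHom ℂ (surel q) (zF 0)

/-- The generator `β` of `A(SU_q(2))`. -/
def βg (q : ℝ) : SU q := RingQuot.mkAlgHom ℂ (surel q) (zF 1)

/-- The elements `e_{j,k,l}` of `A(SU_q(2))`: `α^j β^k (β*)^l` for `j ≥ 0`
and `β^k (β*)^l (α*)^{-j}` for `j < 0`. -/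
def e (q : ℝ) (j : ℤ) (k l : ℕ) : SU q :=
  if 0 ≤ j then αg q ^ j.toNat * βg q ^ k * star (βg q) ^ l
  else βg q ^ k * star (βg q) ^ l * star (αg q) ^ (-j).toNat

/-- The subspace `V_m ⊆ A(SU_q(2))` spanned by the `e_{j,k,l}` with `k + l ≥ m`. -/
def V (q : ℝ) (m : ℕ) : Submodule ℂ (SU q) :=
  Submodule.span ℂ {x | ∃ (j : ℤ) (k l : ℕ), m ≤ k + l ∧ x = e q j k l}

/-- The commutator ideal of a ring: the two-sided ideal generated by all
commutators `a * b - b * a`.  For a *-algebra this coincides with the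
two-sided *-ideal generated by the commutators, since the star of a
commutator is again a commutator. -/
def commutatorIdeal (A : Type) [Ring A] : TwoSidedIdeal A :=
  TwoSidedIdeal.span {x | ∃ a b : A, x = a * b - b * a}


/-!
Every commutator lies in the kernel of the character `toLaurent : α ↦ T, β ↦ 0` into the
commutative algebra `ℂ[T, T⁻¹]`. For `q ≠ 0` the `e_{j,k,l}` span `A(SU_q(2))`, because left
multiplication by a generator sends each `e_{j,k,l}` to an explicit combination of `e`'s; as
the `e_{j,0,0}` go to the independent monomials `T ^ j`, the kernel of `toLaurent` is exactly
`V₁`. Conversely `[α, α*] = (q² - 1) ββ*`, `[α*, β] = (q - 1) βα*` and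
`[α*, β*] = (q - 1) β*α*`, so for `q² ≠ 1` expanding `β = β (αα* + ββ*)` and
`β* = β* (αα* + ββ*)` puts `β` and `β*`, hence all of `V₁`, into the commutator ideal.
-/

end QAlg

section QCommute

variable {R A : Type*} [CommSemiring R] [Semiring A] [Algebra R A] {x y : A} {c : R}

theorem mul_pow_eq_smul_pow_mul (h : x * y = c • (y * x)) (n : ℕ) :
    x * y ^ n = c ^ n • (y ^ n * x) := by
  induction n with
  | zero => simp
  | succ n ih =>
    rw [pow_succ, ← mul_assoc, ih, smul_mul_assoc, mul_assoc, h, mul_smul_comm, smul_smul,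
      ← pow_succ, ← mul_assoc, ← pow_succ]

theorem mul_pow_mul_eq_smul (h : x * y = c • (y * x)) (n : ℕ) (z : A) :
    x * (y ^ n * z) = c ^ n • (y ^ n * (x * z)) := by
  rw [← mul_assoc, mul_pow_eq_smul_pow_mul h, smul_mul_assoc, mul_assoc]

end QCommute

theorem mul_eq_inv_smul_of_mul_eq_smul {K A : Type*} [Field K] [Ring A] [Algebra K A] {x y : A}
    {c : K} (hc : c ≠ 0) (h : x * y = c • (y * x)) : y * x = c⁻¹ • (x * y) := by
  rw [h, smul_smul, inv_mul_cancel₀ hc, one_smul]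

theorem TwoSidedIdeal.smul_mem_iff_of_ne_zero {K A : Type*} [Field K] [Ring A] [Algebra K A]
    (I : TwoSidedIdeal A) {c : K} (hc : c ≠ 0) {x : A} : c • x ∈ I ↔ x ∈ I := by
  refine ⟨fun h => ?_, fun h => Algebra.smul_def c x ▸ I.mul_mem_left _ _ h⟩
  simpa [Algebra.smul_def, ← mul_assoc, ← map_mul, hc] using
    I.mul_mem_left (algebraMap K A c⁻¹) _ h

theorem MonoidAlgebra.adjoin_image_of_eq_top {R M : Type*} [CommSemiring R] [Monoid M]
    {S : Set M} (hS : Submonoid.closure S = ⊤) : Algebra.adjoin R (of R M '' S) = ⊤ := by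
  have hM : Submonoid.closure S ≤ (Algebra.adjoin R (of R M '' S)).toSubmonoid.comap (of R M) :=
    Submonoid.closure_le.mpr fun m hm => Algebra.subset_adjoin ⟨m, hm, rfl⟩
  rw [hS] at hM
  refine Algebra.eq_top_iff.mpr fun f => ?_
  induction f using MonoidAlgebra.induction_on with
  | of m => exact hM (Submonoid.mem_top m)
  | add f g hf hg => exact Subalgebra.add_mem _ hf hg
  | smul c f hf => exact Subalgebra.smul_mem _ hf c

namespace QAlg

lemma commutator_mem_commutatorIdeal {A : Type} [Ring A] (a b : A) :
    a * b - b * a ∈ commutatorIdeal A :=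
  TwoSidedIdeal.subset_span ⟨a, b, rfl⟩

lemma commutatorIdeal_le_ker {A B : Type} [Ring A] [CommRing B] (f : A →+* B) :
    commutatorIdeal A ≤ TwoSidedIdeal.ker f := by
  refine TwoSidedIdeal.span_le.mpr ?_
  rintro _ ⟨a, b, rfl⟩
  rw [SetLike.mem_coe, TwoSidedIdeal.mem_ker, map_sub, map_mul, map_mul, mul_comm, sub_self]

lemma starF_smul {X : Type} (c : ℂ) (f : F X) : starF (c • f) = starRingEnd ℂ c • starF f := by
  induction f using MonoidAlgebra.induction_on generalizing c with
  | of w => simp [MonoidAlgebra.of_apply, MonoidAlgebra.smul_single, starF_single]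
  | add f g hf hg => rw [smul_add, starF_add, starF_add, hf, hg, smul_add]
  | smul c' f hf => rw [smul_smul, hf, hf, smul_smul, map_mul]

lemma starF_one {X : Type} : starF (1 : F X) = 1 := by
  rw [MonoidAlgebra.one_def, starF_single]
  simp [wordStar]

lemma starF_zF {X : Type} (i : X) : starF (zF i) = zsF i := by
  simp [zF, zsF, MonoidAlgebra.of_apply, starF_single, wordStar]

lemma starF_zsF {X : Type} (i : X) : starF (zsF i) = zF i := by
  rw [← starF_zF, starF_starF]

lemma star_mkAlgHom (q : ℝ) (f : F (Fin 2)) :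
    star (RingQuot.mkAlgHom ℂ (surel q) f) = RingQuot.mkAlgHom ℂ (surel q) (starF f) := by
  simp only [RingQuot.mkAlgHom_def, RingQuot.mkRingHom_def]
  rfl

lemma star_αg (q : ℝ) : star (αg q) = RingQuot.mkAlgHom ℂ (surel q) (zsF 0) := by
  rw [αg, star_mkAlgHom, starF_zF]

lemma star_βg (q : ℝ) : star (βg q) = RingQuot.mkAlgHom ℂ (surel q) (zsF 1) := by
  rw [βg, star_mkAlgHom, starF_zF]

section Relations

variable (q : ℝ)

lemma βg_mul_αg : βg q * αg q = (q : ℂ) • (αg q * βg q) := by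
  have h := RingQuot.mkAlgHom_rel ℂ (surel.r1 (q := q))
  rwa [map_mul, map_smul, map_mul] at h

lemma star_βg_mul_αg : star (βg q) * αg q = (q : ℂ) • (αg q * star (βg q)) := by
  have h := RingQuot.mkAlgHom_rel ℂ (surel.r2 (q := q))
  rwa [map_mul, map_smul, map_mul, ← star_βg] at h

lemma commute_βg_star_βg : Commute (βg q) (star (βg q)) := by
  have h := RingQuot.mkAlgHom_rel ℂ (surel.r3 (q := q))
  rwa [map_mul, map_mul, ← star_βg] at h

lemma αg_mul_star_αg : αg q * star (αg q) = 1 - βg q * star (βg q) := by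
  refine eq_sub_of_add_eq ?_
  have h := RingQuot.mkAlgHom_rel ℂ (surel.r4 (q := q))
  rwa [map_add, map_mul, map_mul, map_one, ← star_αg, ← star_βg] at h

lemma star_αg_mul_αg : star (αg q) * αg q = 1 - (q : ℂ) ^ 2 • (βg q * star (βg q)) := by
  refine eq_sub_of_add_eq ?_
  have h := RingQuot.mkAlgHom_rel ℂ (surel.r5 (q := q))
  rwa [map_add, map_mul, map_smul, map_mul, map_one, ← star_αg, ← star_βg,
    Complex.ofReal_pow] at h

lemma star_αg_mul_star_βg :
    star (αg q) * star (βg q) = (q : ℂ) • (star (βg q) * star (αg q)) := by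
  have h := RingQuot.mkAlgHom_rel ℂ (surel.star_rel (surel.r1 (q := q)))
  rwa [starF_mul, starF_smul, starF_mul, starF_zF, starF_zF, Complex.conj_ofReal, map_mul,
    map_smul, map_mul, ← star_αg, ← star_βg] at h

lemma star_αg_mul_βg : star (αg q) * βg q = (q : ℂ) • (βg q * star (αg q)) := by
  have h := RingQuot.mkAlgHom_rel ℂ (surel.star_rel (surel.r2 (q := q)))
  rwa [starF_mul, starF_smul, starF_mul, starF_zF, starF_zsF, Complex.conj_ofReal, map_mul,
    map_smul, map_mul, ← star_αg] at h

end Relations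

section Monomials

variable (q : ℝ)

lemma e_natCast (n k l : ℕ) : e q n k l = αg q ^ n * (βg q ^ k * star (βg q) ^ l) := by
  simp [e, mul_assoc]

lemma e_neg_natCast (n k l : ℕ) :
    e q (-n) k l = βg q ^ k * (star (βg q) ^ l * star (αg q) ^ n) := by
  rcases n with _ | n
  · simp [e]
  · have hn : ¬ (0 ≤ -((n + 1 : ℕ) : ℤ)) := by omega
    rw [e, if_neg hn, neg_neg, Int.toNat_natCast, mul_assoc]

variable {q} {j : ℤ} (k l : ℕ)

lemma αg_mul_e_of_nonneg (hj : 0 ≤ j) : αg q * e q j k l = e q (j + 1) k l := by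
  lift j to ℕ using hj
  rw [← Nat.cast_succ, e_natCast, e_natCast, ← mul_assoc, ← pow_succ']

lemma αg_mul_e_of_neg (hq : q ≠ 0) (hj : j < 0) :
    αg q * e q j k l =
      (q : ℂ)⁻¹ ^ (k + l) • (e q (j + 1) k l - e q (j + 1) (k + 1) (l + 1)) := by
  obtain ⟨n, rfl⟩ : ∃ n : ℕ, j = -(n + 1 : ℕ) := ⟨(-j - 1).toNat, by omega⟩
  have hq' : (q : ℂ) ≠ 0 := Complex.ofReal_ne_zero.mpr hq
  have hα : αg q * star (αg q) ^ (n + 1) =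
      star (αg q) ^ n - βg q * (star (βg q) * star (αg q) ^ n) := by
    rw [pow_succ', ← mul_assoc, αg_mul_star_αg, sub_mul, one_mul, mul_assoc]
  rw [show -((n + 1 : ℕ) : ℤ) + 1 = -n by push_cast; ring, e_neg_natCast, e_neg_natCast,
    e_neg_natCast,
    mul_pow_mul_eq_smul (mul_eq_inv_smul_of_mul_eq_smul hq' (βg_mul_αg q)),
    mul_pow_mul_eq_smul (mul_eq_inv_smul_of_mul_eq_smul hq' (star_βg_mul_αg q)), hα, mul_sub,
    ((commute_βg_star_βg q).symm.pow_left l).left_comm, ← mul_assoc (star (βg q) ^ l),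
    ← pow_succ, mul_smul_comm, mul_sub (βg q ^ k), ← mul_assoc (βg q ^ k) (βg q), ← pow_succ]
  module

lemma βg_mul_e_of_nonneg (hj : 0 ≤ j) :
    βg q * e q j k l = (q : ℂ) ^ j.toNat • e q j (k + 1) l := by
  lift j to ℕ using hj
  rw [e_natCast, e_natCast, mul_pow_mul_eq_smul (βg_mul_αg q), ← mul_assoc (βg q),
    ← pow_succ', Int.toNat_natCast]

lemma βg_mul_e_of_neg (hj : j < 0) : βg q * e q j k l = e q j (k + 1) l := by
  obtain ⟨n, rfl⟩ : ∃ n : ℕ, j = -n := ⟨(-j).toNat, by omega⟩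
  rw [e_neg_natCast, e_neg_natCast, ← mul_assoc, ← pow_succ']

lemma star_βg_mul_e_of_nonneg (hj : 0 ≤ j) :
    star (βg q) * e q j k l = (q : ℂ) ^ j.toNat • e q j k (l + 1) := by
  lift j to ℕ using hj
  rw [e_natCast, e_natCast, mul_pow_mul_eq_smul (star_βg_mul_αg q),
    ((commute_βg_star_βg q).symm.pow_right k).left_comm, ← pow_succ', Int.toNat_natCast]

lemma star_βg_mul_e_of_neg (hj : j < 0) : star (βg q) * e q j k l = e q j k (l + 1) := by
  obtain ⟨n, rfl⟩ : ∃ n : ℕ, j = -n := ⟨(-j).toNat, by omega⟩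
  rw [e_neg_natCast, e_neg_natCast, ((commute_βg_star_βg q).symm.pow_right k).left_comm,
    ← mul_assoc (star (βg q)), ← pow_succ']

lemma star_αg_mul_e_of_nonpos (hj : j ≤ 0) :
    star (αg q) * e q j k l = (q : ℂ) ^ (k + l) • e q (j - 1) k l := by
  obtain ⟨n, rfl⟩ : ∃ n : ℕ, j = -n := ⟨(-j).toNat, by omega⟩
  rw [show -(n : ℤ) - 1 = -(n + 1 : ℕ) by push_cast; ring, e_neg_natCast, e_neg_natCast,
    mul_pow_mul_eq_smul (star_αg_mul_βg q), mul_pow_mul_eq_smul (star_αg_mul_star_βg q),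
    ← pow_succ', mul_smul_comm, smul_smul, pow_add (q : ℂ)]

lemma star_αg_mul_e_of_pos (hj : 0 < j) :
    star (αg q) * e q j k l =
      e q (j - 1) k l - (q : ℂ) ^ (2 * j.toNat) • e q (j - 1) (k + 1) (l + 1) := by
  obtain ⟨n, rfl⟩ : ∃ n : ℕ, j = (n + 1 : ℕ) := ⟨(j - 1).toNat, by omega⟩
  rw [show ((n + 1 : ℕ) : ℤ) - 1 = n by push_cast; ring, Int.toNat_natCast, e_natCast,
    e_natCast, e_natCast, pow_succ', mul_assoc, ← mul_assoc (star (αg q)), star_αg_mul_αg,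
    sub_mul, one_mul, smul_mul_assoc, mul_assoc, mul_pow_mul_eq_smul (star_βg_mul_αg q),
    mul_smul_comm, mul_pow_mul_eq_smul (βg_mul_αg q),
    ((commute_βg_star_βg q).symm.pow_right k).left_comm, ← pow_succ', ← mul_assoc (βg q),
    ← pow_succ']
  module

end Monomials

lemma adjoin_generators_eq_top (q : ℝ) :
    Algebra.adjoin ℂ {αg q, βg q, star (αg q), star (βg q)} = ⊤ := by
  have hF := MonoidAlgebra.adjoin_image_of_eq_top (R := ℂ)
    (FreeMonoid.closure_range_of (α := Gen (Fin 2)))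
  rw [eq_top_iff, ← (AlgHom.range_eq_top _).mpr (RingQuot.mkAlgHom_surjective ℂ (surel q)),
    ← Algebra.map_top, ← hF, ← Algebra.adjoin_image]
  refine Algebra.adjoin_mono ?_
  rintro _ ⟨_, ⟨_, ⟨i | i, rfl⟩, rfl⟩, rfl⟩ <;> fin_cases i
  · exact Or.inl rfl
  · exact Or.inr (Or.inl rfl)
  · exact Or.inr (Or.inr (Or.inl (star_αg q).symm))
  · exact Or.inr (Or.inr (Or.inr (star_βg q).symm))

section Spanning

variable {q : ℝ}

lemma e_mem_V {m : ℕ} (j : ℤ) {k l : ℕ} (h : m ≤ k + l) : e q j k l ∈ V q m :=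
  Submodule.subset_span ⟨j, k, l, h, rfl⟩

lemma generator_mul_e_mem_V_zero (hq : q ≠ 0) {g : SU q}
    (hg : g ∈ ({αg q, βg q, star (αg q), star (βg q)} : Set (SU q))) (j : ℤ) (k l : ℕ) :
    g * e q j k l ∈ V q 0 := by
  have he : ∀ j k l, e q j k l ∈ V q 0 := fun j k l => e_mem_V j (Nat.zero_le _)
  rcases hg with rfl | rfl | rfl | rfl
  · rcases le_or_gt 0 j with hj | hj
    · rw [αg_mul_e_of_nonneg k l hj]
      exact he _ _ _
    · rw [αg_mul_e_of_neg k l hq hj]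
      exact Submodule.smul_mem _ _ (sub_mem (he _ _ _) (he _ _ _))
  · rcases le_or_gt 0 j with hj | hj
    · rw [βg_mul_e_of_nonneg k l hj]
      exact Submodule.smul_mem _ _ (he _ _ _)
    · rw [βg_mul_e_of_neg k l hj]
      exact he _ _ _
  · rcases le_or_gt j 0 with hj | hj
    · rw [star_αg_mul_e_of_nonpos k l hj]
      exact Submodule.smul_mem _ _ (he _ _ _)
    · rw [star_αg_mul_e_of_pos k l hj]
      exact sub_mem (he _ _ _) (Submodule.smul_mem _ _ (he _ _ _))
  · rcases le_or_gt 0 j with hj | hj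
    · rw [star_βg_mul_e_of_nonneg k l hj]
      exact Submodule.smul_mem _ _ (he _ _ _)
    · rw [star_βg_mul_e_of_neg k l hj]
      exact he _ _ _

lemma V_zero_eq_top (hq : q ≠ 0) : V q 0 = ⊤ := by
  have hmul : ∀ x : SU q, ∀ v ∈ V q 0, x * v ∈ V q 0 := by
    intro x
    have hx : x ∈ Algebra.adjoin ℂ {αg q, βg q, star (αg q), star (βg q)} := by
      rw [adjoin_generators_eq_top]
      exact Algebra.mem_top
    induction hx using Algebra.adjoin_induction with
    | mem g hg =>
      intro v hv
      induction hv using Submodule.span_induction with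
      | mem _ h =>
        obtain ⟨j, k, l, -, rfl⟩ := h
        exact generator_mul_e_mem_V_zero hq hg j k l
      | zero => rw [mul_zero]; exact zero_mem _
      | add v w _ _ hv hw => rw [mul_add]; exact add_mem hv hw
      | smul c v _ hv => rw [mul_smul_comm]; exact Submodule.smul_mem _ c hv
    | algebraMap c => intro v hv; rw [← Algebra.smul_def]; exact Submodule.smul_mem _ c hv
    | add x y _ _ hx hy => intro v hv; rw [add_mul]; exact add_mem (hx v hv) (hy v hv)
    | mul x y _ _ hx hy => intro v hv; rw [mul_assoc]; exact hx _ (hy v hv)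
  have h1 : (1 : SU q) ∈ V q 0 := by simpa [e] using e_mem_V (q := q) 0 (le_refl (0 + 0))
  exact eq_top_iff.mpr fun x _ => mul_one x ▸ hmul x 1 h1

end Spanning

open LaurentPolynomial

/-- Restriction of functions on `SU_q(2)` to the circle of diagonal matrices `diag(z, z̄)`. -/
def laurentValue : Gen (Fin 2) → ℂ[T;T⁻¹]
  | Sum.inl i => if i = 0 then T 1 else 0
  | Sum.inr i => if i = 0 then T (-1) else 0

def toLaurentF : F (Fin 2) →ₐ[ℂ] ℂ[T;T⁻¹] :=
  MonoidAlgebra.lift ℂ ℂ[T;T⁻¹] (FreeMonoid (Gen (Fin 2))) (FreeMonoid.lift laurentValue)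

@[simp] lemma toLaurentF_zF (i : Fin 2) :
    toLaurentF (zF i) = if i = 0 then T 1 else 0 := by
  rw [toLaurentF, zF, MonoidAlgebra.lift_of, FreeMonoid.lift_eval_of, laurentValue]

@[simp] lemma toLaurentF_zsF (i : Fin 2) :
    toLaurentF (zsF i) = if i = 0 then T (-1) else 0 := by
  rw [toLaurentF, zsF, MonoidAlgebra.lift_of, FreeMonoid.lift_eval_of, laurentValue]

lemma toLaurentF_eq_of_surel {q : ℝ} {a b : F (Fin 2)} (h : surel q a b) :
    toLaurentF a = toLaurentF b ∧ toLaurentF (starF a) = toLaurentF (starF b) := by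
  induction h with
  | star_rel _ ih => exact ⟨ih.2, by rw [starF_starF, starF_starF]; exact ih.1⟩
  | _ =>
    simp only [starF_add, starF_mul, starF_smul, starF_one, starF_zF, starF_zsF,
      Complex.conj_ofReal, map_add, map_mul, map_smul, map_one, toLaurentF_zF, toLaurentF_zsF]
    simp [← T_add, T_zero, -T_mul]

def toLaurent (q : ℝ) : SU q →ₐ[ℂ] ℂ[T;T⁻¹] :=
  RingQuot.liftAlgHom ℂ ⟨toLaurentF, fun _ _ h => (toLaurentF_eq_of_surel h).1⟩

section Kernel

variable {q : ℝ}

@[simp] lemma toLaurent_αg : toLaurent q (αg q) = T 1 := by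
  simp [toLaurent, αg]

@[simp] lemma toLaurent_βg : toLaurent q (βg q) = 0 := by
  simp [toLaurent, βg]

@[simp] lemma toLaurent_star_αg : toLaurent q (star (αg q)) = T (-1) := by
  simp [toLaurent, star_αg]

@[simp] lemma toLaurent_star_βg : toLaurent q (star (βg q)) = 0 := by
  simp [toLaurent, star_βg]

lemma toLaurent_e_zero_zero (j : ℤ) : toLaurent q (e q j 0 0) = T j := by
  rcases j.eq_nat_or_neg with ⟨n, rfl | rfl⟩
  · simp [e_natCast, T_pow]
  · simp [e_neg_natCast, T_pow]

lemma toLaurent_e_of_pos (j : ℤ) {k l : ℕ} (h : 1 ≤ k + l) : toLaurent q (e q j k l) = 0 := by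
  rcases Nat.eq_zero_or_pos k with rfl | hk
  · unfold e; split_ifs <;> simp [zero_pow (by omega : l ≠ 0)]
  · unfold e; split_ifs <;> simp [zero_pow hk.ne']

lemma V_one_le_ker_toLaurent : V q 1 ≤ LinearMap.ker (toLaurent q).toLinearMap :=
  Submodule.span_le.mpr fun _ ⟨j, _, _, h, hx⟩ => hx ▸ toLaurent_e_of_pos j h

lemma V_zero_le_span_diag_sup_V_one :
    V q 0 ≤ Submodule.span ℂ (Set.range fun j : ℤ => e q j 0 0) ⊔ V q 1 := by
  refine Submodule.span_le.mpr ?_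
  rintro _ ⟨j, k, l, -, rfl⟩
  rcases Nat.eq_zero_or_pos (k + l) with h | h
  · obtain ⟨rfl, rfl⟩ : k = 0 ∧ l = 0 := by omega
    exact Submodule.mem_sup_left (Submodule.subset_span ⟨j, rfl⟩)
  · exact Submodule.mem_sup_right (e_mem_V j h)

lemma disjoint_span_diag_ker_toLaurent :
    Disjoint (Submodule.span ℂ (Set.range fun j : ℤ => e q j 0 0))
      (LinearMap.ker (toLaurent q).toLinearMap) := by
  refine Submodule.range_ker_disjoint ?_
  have hT : (toLaurent q).toLinearMap ∘ (fun j : ℤ => e q j 0 0) = fun j => T j :=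
    funext toLaurent_e_zero_zero
  rw [hT]
  exact (AddMonoidAlgebra.basis ℤ ℂ).linearIndependent

lemma V_one_eq_ker_toLaurent (hq : q ≠ 0) : V q 1 = LinearMap.ker (toLaurent q).toLinearMap := by
  refine le_antisymm V_one_le_ker_toLaurent fun x hx => ?_
  have hx0 : x ∈ V q 0 := V_zero_eq_top hq ▸ Submodule.mem_top
  obtain ⟨y, hy, z, hz, rfl⟩ := Submodule.mem_sup.mp (V_zero_le_span_diag_sup_V_one hx0)
  have hy0 : y ∈ LinearMap.ker (toLaurent q).toLinearMap := by
    simpa using sub_mem hx (V_one_le_ker_toLaurent hz)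
  rw [Submodule.disjoint_def.mp disjoint_span_diag_ker_toLaurent y hy hy0, zero_add]
  exact hz

end Kernel

section CommutatorIdeal

variable {q : ℝ}

lemma commutator_αg_star_αg :
    αg q * star (αg q) - star (αg q) * αg q = ((q : ℂ) ^ 2 - 1) • (βg q * star (βg q)) := by
  rw [αg_mul_star_αg, star_αg_mul_αg]
  module

lemma commutator_star_αg_βg :
    star (αg q) * βg q - βg q * star (αg q) = ((q : ℂ) - 1) • (βg q * star (αg q)) := by
  rw [star_αg_mul_βg]
  module

lemma commutator_star_αg_star_βg :
    star (αg q) * star (βg q) - star (βg q) * star (αg q) =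
      ((q : ℂ) - 1) • (star (βg q) * star (αg q)) := by
  rw [star_αg_mul_star_βg]
  module

lemma βg_mul_star_βg_mem_commutatorIdeal (hq : q ^ 2 ≠ 1) :
    βg q * star (βg q) ∈ commutatorIdeal (SU q) := by
  refine (TwoSidedIdeal.smul_mem_iff_of_ne_zero _ (c := (q : ℂ) ^ 2 - 1) ?_).mp ?_
  · exact_mod_cast sub_ne_zero.mpr hq
  · exact commutator_αg_star_αg ▸ commutator_mem_commutatorIdeal _ _

lemma βg_mul_star_αg_mem_commutatorIdeal (hq : q ≠ 1) :
    βg q * star (αg q) ∈ commutatorIdeal (SU q) := by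
  refine (TwoSidedIdeal.smul_mem_iff_of_ne_zero _ (c := (q : ℂ) - 1) ?_).mp ?_
  · exact_mod_cast sub_ne_zero.mpr hq
  · exact commutator_star_αg_βg ▸ commutator_mem_commutatorIdeal _ _

lemma star_βg_mul_star_αg_mem_commutatorIdeal (hq : q ≠ 1) :
    star (βg q) * star (αg q) ∈ commutatorIdeal (SU q) := by
  refine (TwoSidedIdeal.smul_mem_iff_of_ne_zero _ (c := (q : ℂ) - 1) ?_).mp ?_
  · exact_mod_cast sub_ne_zero.mpr hq
  · exact commutator_star_αg_star_βg ▸ commutator_mem_commutatorIdeal _ _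

variable (hq2 : q ^ 2 ≠ 1) (hq1 : q ≠ 1)
include hq2 hq1

lemma βg_mem_commutatorIdeal : βg q ∈ commutatorIdeal (SU q) := by
  have hβ : βg q =
      ((q : ℂ) • αg q) * (βg q * star (αg q)) + βg q * (βg q * star (βg q)) := by
    rw [← mul_assoc ((q : ℂ) • αg q), smul_mul_assoc, ← βg_mul_αg, mul_assoc, ← mul_add,
      αg_mul_star_αg, sub_add_cancel, mul_one]
  rw [hβ]
  exact add_mem (TwoSidedIdeal.mul_mem_left _ _ _ (βg_mul_star_αg_mem_commutatorIdeal hq1))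
    (TwoSidedIdeal.mul_mem_left _ _ _ (βg_mul_star_βg_mem_commutatorIdeal hq2))

lemma star_βg_mem_commutatorIdeal : star (βg q) ∈ commutatorIdeal (SU q) := by
  have hβ : star (βg q) =
      ((q : ℂ) • αg q) * (star (βg q) * star (αg q)) + βg q * star (βg q) * star (βg q) := by
    rw [((commute_βg_star_βg q).mul_left (Commute.refl _)).eq, ← mul_assoc ((q : ℂ) • αg q),
      smul_mul_assoc, ← star_βg_mul_αg, mul_assoc, ← mul_add, αg_mul_star_αg, sub_add_cancel,
      mul_one]
  rw [hβ]
  exact add_mem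
    (TwoSidedIdeal.mul_mem_left _ _ _ (star_βg_mul_star_αg_mem_commutatorIdeal hq1))
    (TwoSidedIdeal.mul_mem_right _ _ _ (βg_mul_star_βg_mem_commutatorIdeal hq2))

lemma e_mem_commutatorIdeal (j : ℤ) {k l : ℕ} (h : 1 ≤ k + l) :
    e q j k l ∈ commutatorIdeal (SU q) := by
  have hpow {x : SU q} (hx : x ∈ commutatorIdeal (SU q)) {n : ℕ} (hn : n ≠ 0) :
      x ^ n ∈ commutatorIdeal (SU q) := by
    obtain ⟨n, rfl⟩ := Nat.exists_eq_succ_of_ne_zero hn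
    exact pow_succ x n ▸ TwoSidedIdeal.mul_mem_left _ _ _ hx
  have hkl : βg q ^ k * star (βg q) ^ l ∈ commutatorIdeal (SU q) := by
    rcases Nat.eq_zero_or_pos k with rfl | hk
    · exact TwoSidedIdeal.mul_mem_left _ _ _
        (hpow (star_βg_mem_commutatorIdeal hq2 hq1) (by omega))
    · exact TwoSidedIdeal.mul_mem_right _ _ _ (hpow (βg_mem_commutatorIdeal hq2 hq1) hk.ne')
  unfold e
  split_ifs
  · exact mul_assoc (αg q ^ j.toNat) _ _ ▸ TwoSidedIdeal.mul_mem_left _ _ _ hkl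
  · exact TwoSidedIdeal.mul_mem_right _ _ _ hkl

lemma V_one_subset_commutatorIdeal : (V q 1 : Set (SU q)) ⊆ commutatorIdeal (SU q) := by
  have hV : V q 1 ≤ (commutatorIdeal (SU q)).asIdeal.restrictScalars ℂ :=
    Submodule.span_le.mpr fun _ ⟨j, _, _, h, hx⟩ => hx ▸ e_mem_commutatorIdeal hq2 hq1 j h
  exact fun x hx => TwoSidedIdeal.mem_asIdeal.mp (hV hx)

end CommutatorIdeal

/-- For `0 < q < 1`, the commutator ideal of `A(SU_q(2))` equals `V₁`. -/
theorem commutatorIdeal_SU_eq_V_one (q : ℝ) (hq0 : 0 < q) (hq1 : q < 1) :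
    ∀ x : SU q, x ∈ commutatorIdeal (SU q) ↔ x ∈ V q 1 := by
  intro x
  have hq2 : q ^ 2 ≠ 1 := (pow_lt_one₀ hq0.le hq1 two_ne_zero).ne
  refine ⟨fun hx => ?_, fun hx => V_one_subset_commutatorIdeal hq2 hq1.ne hx⟩
  rw [V_one_eq_ker_toLaurent hq0.ne', LinearMap.mem_ker, AlgHom.toLinearMap_apply]
  exact (TwoSidedIdeal.mem_ker (toLaurent q : SU q →+* ℂ[T;T⁻¹])).mp
    (commutatorIdeal_le_ker _ hx)

end QAlg
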